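/- Let G be a group acting on a set X, let s₁, s₂ ∈ G, set s₀ := s₁ * s₂, and assume s₀² = 1, s₀ ≠ 1, s₁² ≠ 1, s₂² ≠ 1 and that the cyclic subgroups ⟨s₀⟩, ⟨s₁⟩, ⟨s₂⟩ intersect pairwise trivially. Let v ∈ X have trivial stabilizer, and define e₀, e₁, e₂, F₂⁰, F₂¹, F₂² as in the snub orbit setting. Then the set of G-translates of the base faces that contain at least one edge containing v is exactly the five-element set { F₂¹, F₂⁰, s₀ • F₂⁰, F₂², s₁⁻¹ • F₂⁰ }, these five faces are pairwise distinct, and in this cyclic order consecutive faces share an edge containing v: F₂¹ and F₂⁰ share e₁; F₂⁰ and s₀ • F₂⁰ share e₀; s₀ • F₂⁰ and F₂² share s₂⁻¹ • e₂; F₂² and s₁⁻¹ • F₂⁰ share e₂; and s₁⁻¹ • F₂⁰ and F₂¹ share s₁⁻¹ • e₁. Hence the vertex figure of the snub S_P(v) at v is a pentagon. -/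
import Mathlib


open Pointwise

/-- The base edges of the snub: `e₀ = {v, (s₁s₂)•v}`, `e₁ = {v, s₁•v}`, `e₂ = {v, s₂•v}`. -/
def snubBaseEdge {G X : Type*} [Group G] [MulAction G X] (s₁ s₂ : G) (v : X) :
    Fin 3 → Set X :=
  ![{v, (s₁ * s₂) • v}, {v, s₁ • v}, {v, s₂ • v}]

/-- The base faces of the snub: `F₂⁰ = {e₀, e₁, s₁ • e₂}`, `F₂¹ = {s₁ᵏ • e₁ : k ∈ ℤ}`,
`F₂² = {s₂ᵏ • e₂ : k ∈ ℤ}`. -/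
def snubBaseFace {G X : Type*} [Group G] [MulAction G X] (s₁ s₂ : G) (v : X) :
    Fin 3 → Set (Set X) :=
  ![{snubBaseEdge s₁ s₂ v 0, snubBaseEdge s₁ s₂ v 1, s₁ • snubBaseEdge s₁ s₂ v 2},
    {E | ∃ k : ℤ, E = s₁ ^ k • snubBaseEdge s₁ s₂ v 1},
    {E | ∃ k : ℤ, E = s₂ ^ k • snubBaseEdge s₁ s₂ v 2}]

/-- The vertex figure of the snub at `v` is a pentagon: the `G`-translates of the base faces
containing an edge through `v` are exactly the five pairwise distinct faces
`F₂¹, F₂⁰, s₀ • F₂⁰, F₂², s₁⁻¹ • F₂⁰`, and in this cyclic order consecutive faces share an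
edge containing `v`. -/
theorem snub_vertex_figure_pentagon {G X : Type*} [Group G] [MulAction G X]
    (s₁ s₂ : G) (h0 : (s₁ * s₂) ^ 2 = 1) (hs0 : s₁ * s₂ ≠ 1)
    (h1 : s₁ ^ 2 ≠ 1) (h2 : s₂ ^ 2 ≠ 1)
    (h01 : Subgroup.zpowers (s₁ * s₂) ⊓ Subgroup.zpowers s₁ = ⊥)
    (h02 : Subgroup.zpowers (s₁ * s₂) ⊓ Subgroup.zpowers s₂ = ⊥)
    (h12 : Subgroup.zpowers s₁ ⊓ Subgroup.zpowers s₂ = ⊥)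
    (v : X) (hv : ∀ g : G, g • v = v → g = 1) :
    ({F : Set (Set X) | (∃ g : G, ∃ i : Fin 3, F = g • snubBaseFace s₁ s₂ v i) ∧
        ∃ E ∈ F, v ∈ E} =
      {snubBaseFace s₁ s₂ v 1, snubBaseFace s₁ s₂ v 0, (s₁ * s₂) • snubBaseFace s₁ s₂ v 0,
       snubBaseFace s₁ s₂ v 2, s₁⁻¹ • snubBaseFace s₁ s₂ v 0}) ∧
    ([snubBaseFace s₁ s₂ v 1, snubBaseFace s₁ s₂ v 0, (s₁ * s₂) • snubBaseFace s₁ s₂ v 0,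
      snubBaseFace s₁ s₂ v 2, s₁⁻¹ • snubBaseFace s₁ s₂ v 0] : List (Set (Set X))).Nodup ∧
    (v ∈ snubBaseEdge s₁ s₂ v 1 ∧
      snubBaseEdge s₁ s₂ v 1 ∈ snubBaseFace s₁ s₂ v 1 ∧
      snubBaseEdge s₁ s₂ v 1 ∈ snubBaseFace s₁ s₂ v 0) ∧
    (v ∈ snubBaseEdge s₁ s₂ v 0 ∧
      snubBaseEdge s₁ s₂ v 0 ∈ snubBaseFace s₁ s₂ v 0 ∧
      snubBaseEdge s₁ s₂ v 0 ∈ (s₁ * s₂) • snubBaseFace s₁ s₂ v 0) ∧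
    (v ∈ s₂⁻¹ • snubBaseEdge s₁ s₂ v 2 ∧
      s₂⁻¹ • snubBaseEdge s₁ s₂ v 2 ∈ (s₁ * s₂) • snubBaseFace s₁ s₂ v 0 ∧
      s₂⁻¹ • snubBaseEdge s₁ s₂ v 2 ∈ snubBaseFace s₁ s₂ v 2) ∧
    (v ∈ snubBaseEdge s₁ s₂ v 2 ∧
      snubBaseEdge s₁ s₂ v 2 ∈ snubBaseFace s₁ s₂ v 2 ∧
      snubBaseEdge s₁ s₂ v 2 ∈ s₁⁻¹ • snubBaseFace s₁ s₂ v 0) ∧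
    (v ∈ s₁⁻¹ • snubBaseEdge s₁ s₂ v 1 ∧
      s₁⁻¹ • snubBaseEdge s₁ s₂ v 1 ∈ s₁⁻¹ • snubBaseFace s₁ s₂ v 0 ∧
      s₁⁻¹ • snubBaseEdge s₁ s₂ v 1 ∈ snubBaseFace s₁ s₂ v 1) := by
  have E0 : snubBaseEdge s₁ s₂ v 0 = {v, (s₁*s₂)•v} := rfl
  have E1 : snubBaseEdge s₁ s₂ v 1 = {v, s₁•v} := rfl
  have E2 : snubBaseEdge s₁ s₂ v 2 = {v, s₂•v} := rfl
  have FB : snubBaseFace s₁ s₂ v 0 =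
      {snubBaseEdge s₁ s₂ v 0, snubBaseEdge s₁ s₂ v 1, s₁ • snubBaseEdge s₁ s₂ v 2} := rfl
  have FA : snubBaseFace s₁ s₂ v 1 =
      {E | ∃ k : ℤ, E = s₁ ^ k • snubBaseEdge s₁ s₂ v 1} := rfl
  have FD : snubBaseFace s₁ s₂ v 2 =
      {E | ∃ k : ℤ, E = s₂ ^ k • snubBaseEdge s₁ s₂ v 2} := rfl
  -- group facts
  have hmul : (s₁*s₂) * (s₁*s₂) = 1 := by rw [← pow_two]; exact h0
  have hinv : (s₁*s₂)⁻¹ = s₁*s₂ := inv_eq_of_mul_eq_one_right hmul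
  have hs1 : s₁ ≠ 1 := fun h => h1 (by rw [h, one_pow])
  have hs2 : s₂ ≠ 1 := fun h => h2 (by rw [h, one_pow])
  have hbot : ∀ {x y : G}, Subgroup.zpowers x ⊓ Subgroup.zpowers y = ⊥ →
      ∀ (g : G) (m n : ℤ), g = x ^ m → g = y ^ n → g = 1 := by
    intro x y h g m n hm hn
    have hg : g ∈ Subgroup.zpowers x ⊓ Subgroup.zpowers y :=
      Subgroup.mem_inf.2 ⟨Subgroup.mem_zpowers_iff.2 ⟨m, hm.symm⟩,
        Subgroup.mem_zpowers_iff.2 ⟨n, hn.symm⟩⟩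
    rw [h, Subgroup.mem_bot] at hg
    exact hg
  have h0s1 : ∀ k : ℤ, s₁*s₂ ≠ s₁ ^ k := fun k h =>
    hs0 (hbot h01 (s₁*s₂) 1 k (zpow_one _).symm h)
  have h0s2 : ∀ k : ℤ, s₁*s₂ ≠ s₂ ^ k := fun k h =>
    hs0 (hbot h02 (s₁*s₂) 1 k (zpow_one _).symm h)
  have h1s2 : ∀ k : ℤ, s₁ ≠ s₂ ^ k := fun k h =>
    hs1 (hbot h12 s₁ 1 k (zpow_one _).symm h)
  have h2s1 : ∀ k : ℤ, s₂ ≠ s₁ ^ k := fun k h =>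
    hs2 (hbot h12 s₂ k 1 h (zpow_one _).symm)
  have h1is2 : ∀ k : ℤ, s₁⁻¹ ≠ s₂ ^ k := fun k h =>
    h1s2 (-k) (by rw [zpow_neg, ← h, inv_inv])
  have hinj : ∀ a b : G, a • v = b • v → a = b := by
    intro a b h
    have h' := hv (b⁻¹ * a) (by rw [mul_smul, h, inv_smul_smul])
    exact (inv_mul_eq_one.mp h').symm
  have smulE : ∀ g b : G, g • ({v, b•v} : Set X) = {g•v, (g*b)•v} := by
    intro g b
    rw [Set.smul_set_insert, Set.smul_set_singleton, smul_smul]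
  have peq : ∀ a b c d : G, ({a•v, b•v} : Set X) = {c•v, d•v} →
      (a = c ∧ b = d) ∨ (a = d ∧ b = c) := by
    intro a b c d h
    rcases Set.pair_eq_pair_iff.1 h with ⟨ha, hb⟩ | ⟨ha, hb⟩
    · exact Or.inl ⟨hinj _ _ ha, hinj _ _ hb⟩
    · exact Or.inr ⟨hinj _ _ ha, hinj _ _ hb⟩
  have pe1 : ∀ b c d : G, ({v, b•v} : Set X) = {c•v, d•v} →
      (1 = c ∧ b = d) ∨ (1 = d ∧ b = c) := by
    intro b c d h
    exact peq 1 b c d (by rwa [one_smul])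
  have vmem : ∀ c d : G, v ∈ ({c•v, d•v} : Set X) → c = 1 ∨ d = 1 := by
    intro c d h
    rw [Set.mem_insert_iff, Set.mem_singleton_iff] at h
    rcases h with h | h
    · exact Or.inl (hv c h.symm)
    · exact Or.inr (hv d h.symm)
  -- non-membership facts
  have nA0 : snubBaseEdge s₁ s₂ v 0 ∉ snubBaseFace s₁ s₂ v 1 := by
    rw [FA]; rintro ⟨k, hk⟩
    rw [E0, E1, smulE] at hk
    rcases pe1 _ _ _ hk with ⟨_, h'⟩ | ⟨_, h'⟩
    · exact h0s1 (k+1) (by rw [zpow_add_one]; exact h')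
    · exact h0s1 k h'
  have nA2 : snubBaseEdge s₁ s₂ v 2 ∉ snubBaseFace s₁ s₂ v 1 := by
    rw [FA]; rintro ⟨k, hk⟩
    rw [E2, E1, smulE] at hk
    rcases pe1 _ _ _ hk with ⟨_, h'⟩ | ⟨_, h'⟩
    · exact h2s1 (k+1) (by rw [zpow_add_one]; exact h')
    · exact h2s1 k h'
  have nD0 : snubBaseEdge s₁ s₂ v 0 ∉ snubBaseFace s₁ s₂ v 2 := by
    rw [FD]; rintro ⟨k, hk⟩
    rw [E0, E2, smulE] at hk
    rcases pe1 _ _ _ hk with ⟨_, h'⟩ | ⟨_, h'⟩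
    · exact h0s2 (k+1) (by rw [zpow_add_one]; exact h')
    · exact h0s2 k h'
  have nD1 : s₁⁻¹ • snubBaseEdge s₁ s₂ v 1 ∉ snubBaseFace s₁ s₂ v 2 := by
    rw [FD]; rintro ⟨k, hk⟩
    rw [E1, E2, smulE, smulE] at hk
    rcases peq _ _ _ _ hk with ⟨ha, _⟩ | ⟨ha, _⟩
    · exact h1is2 k ha
    · exact h1is2 (k+1) (by rw [zpow_add_one]; exact ha)
  have nC1 : snubBaseEdge s₁ s₂ v 1 ∉ (s₁*s₂) • snubBaseFace s₁ s₂ v 0 := by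
    rw [FB, Set.smul_set_insert, Set.smul_set_insert, Set.smul_set_singleton]
    intro h
    rw [Set.mem_insert_iff, Set.mem_insert_iff, Set.mem_singleton_iff] at h
    rcases h with h | h | h
    · rw [E1, E0, smulE] at h
      rcases pe1 _ _ _ h with ⟨ha, _⟩ | ⟨_, hb⟩
      · exact hs0 ha.symm
      · exact h0s1 1 (by rw [zpow_one]; exact hb.symm)
    · rw [E1, smulE] at h
      rcases pe1 _ _ _ h with ⟨ha, _⟩ | ⟨_, hb⟩
      · exact hs0 ha.symm
      · exact h0s1 1 (by rw [zpow_one]; exact hb.symm)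
    · rw [E1, E2, smul_smul, smulE] at h
      rcases pe1 _ _ _ h with ⟨ha, _⟩ | ⟨_, hb⟩
      · exact h0s1 (-1) (by rw [zpow_neg_one]; exact eq_inv_of_mul_eq_one_left ha.symm)
      · exact hs0 (mul_right_cancel (b := s₁) (by rw [one_mul]; exact hb)).symm
  have nE0 : snubBaseEdge s₁ s₂ v 0 ∉ s₁⁻¹ • snubBaseFace s₁ s₂ v 0 := by
    rw [FB, Set.smul_set_insert, Set.smul_set_insert, Set.smul_set_singleton]
    intro h
    rw [Set.mem_insert_iff, Set.mem_insert_iff, Set.mem_singleton_iff] at h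
    rcases h with h | h | h
    · rw [E0, smulE] at h
      rcases pe1 _ _ _ h with ⟨ha, _⟩ | ⟨_, hb⟩
      · exact hs1 (inv_eq_one.mp ha.symm)
      · exact h0s1 (-1) (by rw [zpow_neg_one]; exact hb)
    · rw [E0, E1, smulE] at h
      rcases pe1 _ _ _ h with ⟨ha, _⟩ | ⟨_, hb⟩
      · exact hs1 (inv_eq_one.mp ha.symm)
      · exact h0s1 (-1) (by rw [zpow_neg_one]; exact hb)
    · rw [E0, E2, smul_smul, smulE] at h
      rcases pe1 _ _ _ h with ⟨_, hb⟩ | ⟨ha, _⟩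
      · rw [inv_mul_cancel, one_mul] at hb
        exact h0s2 1 (by rw [zpow_one]; exact hb)
      · rw [inv_mul_cancel, one_mul] at ha
        exact hs2 ha.symm
  -- membership facts
  have hB0 : snubBaseEdge s₁ s₂ v 0 ∈ snubBaseFace s₁ s₂ v 0 := by
    rw [FB]; exact Set.mem_insert _ _
  have hB1 : snubBaseEdge s₁ s₂ v 1 ∈ snubBaseFace s₁ s₂ v 0 := by
    rw [FB]; exact Set.mem_insert_of_mem _ (Set.mem_insert _ _)
  have hB2 : s₁ • snubBaseEdge s₁ s₂ v 2 ∈ snubBaseFace s₁ s₂ v 0 := by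
    rw [FB]; exact Set.mem_insert_of_mem _ (Set.mem_insert_of_mem _ rfl)
  have hA1 : snubBaseEdge s₁ s₂ v 1 ∈ snubBaseFace s₁ s₂ v 1 := by
    rw [FA]; exact ⟨0, by rw [zpow_zero, one_smul]⟩
  have hA1' : s₁⁻¹ • snubBaseEdge s₁ s₂ v 1 ∈ snubBaseFace s₁ s₂ v 1 := by
    rw [FA]; exact ⟨-1, by rw [zpow_neg_one]⟩
  have hD2 : snubBaseEdge s₁ s₂ v 2 ∈ snubBaseFace s₁ s₂ v 2 := by
    rw [FD]; exact ⟨0, by rw [zpow_zero, one_smul]⟩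
  have hD2' : s₂⁻¹ • snubBaseEdge s₁ s₂ v 2 ∈ snubBaseFace s₁ s₂ v 2 := by
    rw [FD]; exact ⟨-1, by rw [zpow_neg_one]⟩
  have hC0 : snubBaseEdge s₁ s₂ v 0 ∈ (s₁*s₂) • snubBaseFace s₁ s₂ v 0 := by
    have h' : (s₁*s₂) • snubBaseEdge s₁ s₂ v 0 = snubBaseEdge s₁ s₂ v 0 := by
      rw [E0, smulE, hmul, one_smul, Set.pair_comm]
    rw [← h']; exact Set.smul_mem_smul_set hB0
  have hq : (s₁*s₂)*s₁ = s₂⁻¹ := by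
    have h' : ((s₁*s₂)*s₁)*s₂ = 1 := by rw [mul_assoc]; exact hmul
    exact eq_inv_of_mul_eq_one_left h'
  have hC2 : s₂⁻¹ • snubBaseEdge s₁ s₂ v 2 ∈ (s₁*s₂) • snubBaseFace s₁ s₂ v 0 := by
    have h' : (s₁*s₂) • (s₁ • snubBaseEdge s₁ s₂ v 2) = s₂⁻¹ • snubBaseEdge s₁ s₂ v 2 := by
      rw [smul_smul, hq]
    rw [← h']; exact Set.smul_mem_smul_set hB2
  have hE2 : snubBaseEdge s₁ s₂ v 2 ∈ s₁⁻¹ • snubBaseFace s₁ s₂ v 0 := by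
    have h' : s₁⁻¹ • (s₁ • snubBaseEdge s₁ s₂ v 2) = snubBaseEdge s₁ s₂ v 2 :=
      inv_smul_smul _ _
    rw [← h']; exact Set.smul_mem_smul_set hB2
  have hE1 : s₁⁻¹ • snubBaseEdge s₁ s₂ v 1 ∈ s₁⁻¹ • snubBaseFace s₁ s₂ v 0 :=
    Set.smul_mem_smul_set hB1
  have hv0 : v ∈ snubBaseEdge s₁ s₂ v 0 := by rw [E0]; exact Set.mem_insert _ _
  have hv1 : v ∈ snubBaseEdge s₁ s₂ v 1 := by rw [E1]; exact Set.mem_insert _ _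
  have hv2 : v ∈ snubBaseEdge s₁ s₂ v 2 := by rw [E2]; exact Set.mem_insert _ _
  have hvs2 : v ∈ s₂⁻¹ • snubBaseEdge s₁ s₂ v 2 := by
    rw [E2, smulE, inv_mul_cancel, one_smul]
    exact Set.mem_insert_of_mem _ rfl
  have hvs1 : v ∈ s₁⁻¹ • snubBaseEdge s₁ s₂ v 1 := by
    rw [E1, smulE, inv_mul_cancel, one_smul]
    exact Set.mem_insert_of_mem _ rfl
  -- invariance of the infinite faces
  have hAinv : ∀ m : ℤ, s₁ ^ m • snubBaseFace s₁ s₂ v 1 = snubBaseFace s₁ s₂ v 1 := by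
    intro m
    rw [FA]
    ext E
    constructor
    · rintro ⟨E', ⟨k, rfl⟩, rfl⟩
      exact ⟨m + k, by simp [smul_smul, zpow_add]⟩
    · rintro ⟨k, rfl⟩
      have h' : m + (k - m) = k := by omega
      exact ⟨s₁ ^ (k - m) • snubBaseEdge s₁ s₂ v 1, ⟨k - m, rfl⟩,
        by simp [smul_smul, ← zpow_add, h']⟩
  have hDinv : ∀ m : ℤ, s₂ ^ m • snubBaseFace s₁ s₂ v 2 = snubBaseFace s₁ s₂ v 2 := by
    intro m
    rw [FD]
    ext E
    constructor
    · rintro ⟨E', ⟨k, rfl⟩, rfl⟩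
      exact ⟨m + k, by simp [smul_smul, zpow_add]⟩
    · rintro ⟨k, rfl⟩
      have h' : m + (k - m) = k := by omega
      exact ⟨s₂ ^ (k - m) • snubBaseEdge s₁ s₂ v 2, ⟨k - m, rfl⟩,
        by simp [smul_smul, ← zpow_add, h']⟩
  -- distinctness
  have neq : ∀ {S T : Set (Set X)} {e : Set X}, e ∈ T → e ∉ S → S ≠ T :=
    fun hT hS h => hS (h.symm ▸ hT)
  have hAB := neq hB0 nA0
  have hAC := neq hC0 nA0
  have hAD := neq hD2 nA2
  have hAE := neq hE2 nA2
  have hBC := (neq hB1 nC1).symm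
  have hBD := (neq hB0 nD0).symm
  have hBE := (neq hB0 nE0).symm
  have hCD := (neq hC0 nD0).symm
  have hCE := (neq hC0 nE0).symm
  have hDE := neq hE1 nD1
  refine ⟨?_, ?_, ⟨hv1, hA1, hB1⟩, ⟨hv0, hB0, hC0⟩, ⟨hvs2, hC2, hD2'⟩,
    ⟨hv2, hD2, hE2⟩, ⟨hvs1, hE1, hA1'⟩⟩
  · ext F
    simp only [Set.mem_setOf_eq, Set.mem_insert_iff, Set.mem_singleton_iff]
    constructor
    · rintro ⟨⟨g, i, rfl⟩, E, hEF, hvE⟩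
      fin_cases i
      · obtain ⟨E', hE', rfl⟩ := hEF
        rcases hE' with rfl | rfl | rfl
        · simp only [E0, smulE] at hvE
          rcases vmem _ _ hvE with rfl | hg
          · exact Or.inr (Or.inl (one_smul _ _))
          · have hg' : g = s₁*s₂ := by
              rw [← hinv]; exact eq_inv_of_mul_eq_one_left hg
            exact Or.inr (Or.inr (Or.inl (by subst hg'; rfl)))
        · simp only [E1, smulE] at hvE
          rcases vmem _ _ hvE with rfl | hg
          · exact Or.inr (Or.inl (one_smul _ _))
          · have hg' : g = s₁⁻¹ := eq_inv_of_mul_eq_one_left hg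
            exact Or.inr (Or.inr (Or.inr (Or.inr (by subst hg'; rfl))))
        · simp only [smul_smul] at hvE
          rw [E2, smulE] at hvE
          rcases vmem _ _ hvE with hg | hg
          · have hg' : g = s₁⁻¹ := eq_inv_of_mul_eq_one_left hg
            exact Or.inr (Or.inr (Or.inr (Or.inr (by subst hg'; rfl))))
          · have hg' : g = s₁*s₂ := by
              rw [← hinv]
              exact eq_inv_of_mul_eq_one_left (by rw [← mul_assoc]; exact hg)
            exact Or.inr (Or.inr (Or.inl (by subst hg'; rfl)))
      · obtain ⟨E', hE', rfl⟩ := hEF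
        obtain ⟨k, rfl⟩ := hE'
        simp only [smul_smul] at hvE
        rw [E1, smulE] at hvE
        rcases vmem _ _ hvE with hg | hg
        · have hg' : g = s₁ ^ (-k) := by
            rw [zpow_neg]; exact eq_inv_of_mul_eq_one_left hg
          exact Or.inl (by subst hg'; exact hAinv _)
        · have hg' : g = s₁ ^ (-(k+1)) := by
            rw [zpow_neg]
            refine eq_inv_of_mul_eq_one_left ?_
            rw [zpow_add_one, ← mul_assoc]; exact hg
          exact Or.inl (by subst hg'; exact hAinv _)
      · obtain ⟨E', hE', rfl⟩ := hEF
        obtain ⟨k, rfl⟩ := hE'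
        simp only [smul_smul] at hvE
        rw [E2, smulE] at hvE
        rcases vmem _ _ hvE with hg | hg
        · have hg' : g = s₂ ^ (-k) := by
            rw [zpow_neg]; exact eq_inv_of_mul_eq_one_left hg
          exact Or.inr (Or.inr (Or.inr (Or.inl (by subst hg'; exact hDinv _))))
        · have hg' : g = s₂ ^ (-(k+1)) := by
            rw [zpow_neg]
            refine eq_inv_of_mul_eq_one_left ?_
            rw [zpow_add_one, ← mul_assoc]; exact hg
          exact Or.inr (Or.inr (Or.inr (Or.inl (by subst hg'; exact hDinv _))))
    · rintro (rfl | rfl | rfl | rfl | rfl)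
      · exact ⟨⟨1, 1, (one_smul _ _).symm⟩, snubBaseEdge s₁ s₂ v 1, hA1, hv1⟩
      · exact ⟨⟨1, 0, (one_smul _ _).symm⟩, snubBaseEdge s₁ s₂ v 1, hB1, hv1⟩
      · exact ⟨⟨s₁*s₂, 0, rfl⟩, snubBaseEdge s₁ s₂ v 0, hC0, hv0⟩
      · exact ⟨⟨1, 2, (one_smul _ _).symm⟩, snubBaseEdge s₁ s₂ v 2, hD2, hv2⟩
      · exact ⟨⟨s₁⁻¹, 0, rfl⟩, snubBaseEdge s₁ s₂ v 2, hE2, hv2⟩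
  · simp only [List.nodup_cons, List.mem_cons, List.mem_singleton, List.not_mem_nil,
      or_false, List.nodup_nil, and_true, not_or]
    exact ⟨⟨hAB, hAC, hAD, hAE⟩, ⟨hBC, hBD, hBE⟩, ⟨hCD, hCE⟩, ⟨hDE, not_false⟩⟩
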